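/- arXiv:1201.4440 — 2 statements merged into one kernel-verified Lean document; each statement's English description precedes it below -/
import Mathlib

section
/- Let τ : Ω → (0,∞] and τ_N : Ω → (0,∞] be measurable, and for ρ > 0 define τ(ρ) and τ_N(ρ) as hitting times such that ρ ↦ τ(ρ)(ω) is nonincreasing and left-continuous for a.e. ω, and suppose that for all ρ and δ > 0: τ(ρ+δ) ≤ liminf_N τ_N(ρ) ≤ limsup_N τ_N(ρ) ≤ τ(ρ−δ) almost surely, and τ(ρ) < ∞ a.s. Then for all ρ outside a Lebesgue-null set of (0,∞), τ_N(ρ) → τ(ρ) almost surely as N → ∞. -/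
/-!
For each `ω`, the path `ρ ↦ τ ρ ω` is antitone, so it is right-continuous off a countable set of
radii. Reading its left and right limits off the rationals makes them jointly measurable in
`(ρ, ω)`, so Fubini moves the exceptional set: for almost every `ρ`, the path is continuous at `ρ`
almost surely. At such a `ρ` the sandwich `τ (ρ + δ) ≤ liminf ≤ limsup ≤ τ (ρ - δ)` closes as
`δ → 0`.
-/

open Filter MeasureTheory Set Topology
open scoped ENNReal

/-- For `f` antitone on `(0, ∞)`, the left limit at `ρ`; taken along the rationals so that it is
jointly measurable when `f` depends measurably on a parameter. -/
noncomputable def ratLeftInf (f : ℝ → ℝ≥0∞) (ρ : ℝ) : ℝ≥0∞ :=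
  ⨅ (q : ℚ) (_ : 0 < (q : ℝ) ∧ (q : ℝ) < ρ), f q

/-- For `f` antitone, the right limit at `ρ`, again along the rationals. -/
noncomputable def ratRightSup (f : ℝ → ℝ≥0∞) (ρ : ℝ) : ℝ≥0∞ :=
  ⨆ (q : ℚ) (_ : ρ < (q : ℝ)), f q

section Path

variable {f : ℝ → ℝ≥0∞} {ρ : ℝ}

theorem le_ratLeftInf_iff {c : ℝ≥0∞} :
    c ≤ ratLeftInf f ρ ↔ ∀ q : ℚ, 0 < (q : ℝ) → (q : ℝ) < ρ → c ≤ f q := by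
  simp only [ratLeftInf, le_iInf_iff, and_imp]

theorem ratRightSup_le_iff {c : ℝ≥0∞} :
    ratRightSup f ρ ≤ c ↔ ∀ q : ℚ, ρ < (q : ℝ) → f q ≤ c := by
  simp only [ratRightSup, iSup_le_iff]

theorem ratLeftInf_le {q : ℚ} (hq : 0 < (q : ℝ)) (hqρ : (q : ℝ) < ρ) : ratLeftInf f ρ ≤ f q :=
  le_ratLeftInf_iff.1 le_rfl q hq hqρ

theorem le_ratRightSup {q : ℚ} (hρq : ρ < (q : ℝ)) : f q ≤ ratRightSup f ρ :=
  ratRightSup_le_iff.1 le_rfl q hρq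

theorem ratLeftInf_le_ratRightSup {a b : ℝ} (ha : 0 < a) (hab : a < b) :
    ratLeftInf f b ≤ ratRightSup f a := by
  obtain ⟨q, haq, hqb⟩ := exists_rat_btwn hab
  exact (ratLeftInf_le (ha.trans haq) hqb).trans (le_ratRightSup haq)

theorem countable_setOf_ratRightSup_lt_ratLeftInf (f : ℝ → ℝ≥0∞) :
    {ρ | 0 < ρ ∧ ratRightSup f ρ < ratLeftInf f ρ}.Countable := by
  refine (countable_image_gt_image_Ioi_within (Ioi 0) (ratLeftInf f)).mono ?_
  rintro ρ ⟨hρ, hlt⟩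
  exact ⟨hρ, ratRightSup f ρ, hlt, fun b _ hρb => ratLeftInf_le_ratRightSup hρ hρb⟩

theorem ratLeftInf_eq_of_tendsto (hf : AntitoneOn f (Ioi 0)) (hρ : 0 < ρ)
    (hleft : Tendsto f (𝓝[<] ρ) (𝓝 (f ρ))) : ratLeftInf f ρ = f ρ := by
  refine le_antisymm (ge_of_tendsto hleft ?_) ?_
  · filter_upwards [Ioo_mem_nhdsLT hρ] with x ⟨hx, hxρ⟩
    obtain ⟨q, hxq, hqρ⟩ := exists_rat_btwn hxρ
    exact (ratLeftInf_le (hx.trans hxq) hqρ).trans (hf hx (hx.trans hxq) hxq.le)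
  · exact le_ratLeftInf_iff.2 fun q hq hqρ => hf hq hρ hqρ.le

theorem tendsto_of_ratLeftInf_le_ratRightSup {u : ℕ → ℝ≥0∞}
    (hgap : ratLeftInf f ρ ≤ ratRightSup f ρ) (hρ : ratLeftInf f ρ = f ρ)
    (hlow : ∀ q : ℚ, ρ < (q : ℝ) → f q ≤ liminf u atTop)
    (hup : ∀ q : ℚ, 0 < (q : ℝ) → (q : ℝ) < ρ → limsup u atTop ≤ f q) :
    Tendsto u atTop (𝓝 (f ρ)) := by
  refine tendsto_of_le_liminf_of_limsup_le ?_ ?_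
  · exact hρ ▸ hgap.trans (ratRightSup_le_iff.2 hlow)
  · exact hρ ▸ le_ratLeftInf_iff.2 hup

end Path

section Family

variable {Ω : Type*} [MeasurableSpace Ω] {F : ℝ → Ω → ℝ≥0∞}

theorem measurable_ratLeftInf (hF : ∀ ρ, Measurable (F ρ)) :
    Measurable fun p : ℝ × Ω => ratLeftInf (F · p.2) p.1 := by
  classical
  refine Measurable.iInf fun q => ?_
  simp only [iInf_eq_if]
  have hq : MeasurableSet {p : ℝ × Ω | 0 < (q : ℝ) ∧ (q : ℝ) < p.1} :=
    (MeasurableSet.const _).inter (measurableSet_lt measurable_const measurable_fst)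
  exact Measurable.ite hq ((hF q).comp measurable_snd) measurable_const

theorem measurable_ratRightSup (hF : ∀ ρ, Measurable (F ρ)) :
    Measurable fun p : ℝ × Ω => ratRightSup (F · p.2) p.1 := by
  classical
  refine Measurable.iSup fun q => ?_
  simp only [iSup_eq_if]
  exact Measurable.ite (measurableSet_lt measurable_fst measurable_const)
    ((hF q).comp measurable_snd) measurable_const

theorem ae_ae_ratLeftInf_le_ratRightSup (P : Measure Ω) [SFinite P]
    (hF : ∀ ρ, Measurable (F ρ)) :
    ∀ᵐ ρ, ∀ᵐ ω ∂P, 0 < ρ → ratLeftInf (F · ω) ρ ≤ ratRightSup (F · ω) ρ := by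
  rw [Measure.ae_ae_comm ((measurableSet_lt measurable_const measurable_fst).imp
    (measurableSet_le (measurable_ratLeftInf hF) (measurable_ratRightSup hF)))]
  refine ae_of_all _ fun ω => ?_
  filter_upwards [(countable_setOf_ratRightSup_lt_ratLeftInf (F · ω)).ae_notMem volume]
    with ρ hρ hpos
  exact not_lt.1 fun hlt => hρ ⟨hpos, hlt⟩

end Family

theorem stmt8_general {Ω : Type*} [MeasurableSpace Ω] (P : Measure Ω) [IsProbabilityMeasure P]
    (τ : ℝ → Ω → ENNReal) (τN : ℕ → ℝ → Ω → ENNReal)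
    (hmeas : ∀ ρ, Measurable (τ ρ))
    (hmono : ∀ᵐ ω ∂P, ∀ ρ₁ ρ₂ : ℝ, 0 < ρ₁ → ρ₁ ≤ ρ₂ → τ ρ₂ ω ≤ τ ρ₁ ω)
    (hleft : ∀ᵐ ω ∂P, ∀ ρ : ℝ, 0 < ρ →
      Tendsto (fun s => τ s ω) (nhdsWithin ρ (Set.Iio ρ)) (nhds (τ ρ ω)))
    (hsand : ∀ ρ : ℝ, 0 < ρ → ∀ δ : ℝ, 0 < δ → ∀ᵐ ω ∂P,
      τ (ρ + δ) ω ≤ liminf (fun n => τN n ρ ω) atTop ∧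
      limsup (fun n => τN n ρ ω) atTop ≤ τ (ρ - δ) ω) :
    ∃ s : Set ℝ, volume s = 0 ∧
      ∀ ρ : ℝ, 0 < ρ → ρ ∉ s →
        ∀ᵐ ω ∂P, Tendsto (fun n => τN n ρ ω) atTop (nhds (τ ρ ω)) := by
  refine ⟨{ρ | ¬∀ᵐ ω ∂P, 0 < ρ → ratLeftInf (τ · ω) ρ ≤ ratRightSup (τ · ω) ρ},
    ae_iff.1 (ae_ae_ratLeftInf_le_ratRightSup P hmeas), fun ρ hρ hρs => ?_⟩
  have hlow : ∀ᵐ ω ∂P, ∀ q : ℚ, ρ < (q : ℝ) → τ q ω ≤ liminf (τN · ρ ω) atTop := by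
    refine ae_all_iff.2 fun q => ?_
    by_cases hρq : ρ < (q : ℝ)
    · filter_upwards [hsand ρ hρ _ (sub_pos.2 hρq)] with ω hω _
      simpa using hω.1
    · exact ae_of_all _ fun _ h => absurd h hρq
  have hup : ∀ᵐ ω ∂P, ∀ q : ℚ, 0 < (q : ℝ) → (q : ℝ) < ρ →
      limsup (τN · ρ ω) atTop ≤ τ q ω := by
    refine ae_all_iff.2 fun q => ?_
    by_cases hqρ : (q : ℝ) < ρ
    · filter_upwards [hsand ρ hρ _ (sub_pos.2 hqρ)] with ω hω _ _
      simpa using hω.2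
    · exact ae_of_all _ fun _ _ h => absurd h hqρ
  filter_upwards [not_not.1 hρs, hmono, hleft, hlow, hup] with ω hgap hm hl hlow hup
  exact tendsto_of_ratLeftInf_le_ratRightSup (hgap hρ)
    (ratLeftInf_eq_of_tendsto (fun a ha b _ hab => hm a b ha hab) hρ (hl ρ hρ)) hlow hup

/-- Almost sure convergence of the approximated hitting times at almost every radius. -/
theorem stmt8 {Ω : Type*} [MeasurableSpace Ω] (P : Measure Ω) [IsProbabilityMeasure P]
    (τ : ℝ → Ω → ENNReal) (τN : ℕ → ℝ → Ω → ENNReal)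
    (hmeas : ∀ ρ, Measurable (τ ρ))
    (hmeasN : ∀ n ρ, Measurable (τN n ρ))
    (hmono : ∀ᵐ ω ∂P, ∀ ρ₁ ρ₂ : ℝ, 0 < ρ₁ → ρ₁ ≤ ρ₂ → τ ρ₂ ω ≤ τ ρ₁ ω)
    (hleft : ∀ᵐ ω ∂P, ∀ ρ : ℝ, 0 < ρ →
      Tendsto (fun s => τ s ω) (nhdsWithin ρ (Set.Iio ρ)) (nhds (τ ρ ω)))
    (hfin : ∀ ρ : ℝ, 0 < ρ → ∀ᵐ ω ∂P, τ ρ ω < ⊤)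
    (hsand : ∀ ρ : ℝ, 0 < ρ → ∀ δ : ℝ, 0 < δ → ∀ᵐ ω ∂P,
      τ (ρ + δ) ω ≤ liminf (fun n => τN n ρ ω) atTop ∧
      limsup (fun n => τN n ρ ω) atTop ≤ τ (ρ - δ) ω) :
    ∃ s : Set ℝ, volume s = 0 ∧
      ∀ ρ : ℝ, 0 < ρ → ρ ∉ s →
        ∀ᵐ ω ∂P, Tendsto (fun n => τN n ρ ω) atTop (nhds (τ ρ ω)) :=
  stmt8_general P τ τN hmeas hmono hleft hsand
end

section
/- Fix λ > 0, ε > 0, δ > 0 and a, b ∈ ℝ. Among all C¹ functions f : [−δ, δ] → ℝ with f(−δ) = a and f(δ) = b, the integral ∫_{−δ}^{δ} |f'(t)|² e^{−λt²/(2ε)} dt is minimized by f(t) = (b−a)·(∫_{−δ}^t e^{λs²/(2ε)} ds)/(∫_{−δ}^{δ} e^{λs²/(2ε)} ds) + a, and the minimum value equals (b−a)² / ∫_{−δ}^{δ} e^{λs²/(2ε)} ds. -/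
/-!
Writing `w = e^{λs²/2ε}`, the energy is `∫ f'² / w`. For every constant `c` we have pointwise
`f'² / w ≥ 2 c f' - c² w`, with equality iff `f' = c w`; integrating and using `∫ f' = b - a`
gives `∫ f'² / w ≥ 2 c (b - a) - c² ∫ w`, which for `c = (b - a) / ∫ w` is `(b - a)² / ∫ w`.
Equality is attained by the function with derivative `c w`.
-/

open MeasureTheory intervalIntegral Set

lemma two_mul_mul_sub_sq_mul_le_sq_div {w : ℝ} (hw : 0 < w) (c x : ℝ) :
    2 * c * x - c ^ 2 * w ≤ x ^ 2 / w := by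
  have key : x ^ 2 / w - (2 * c * x - c ^ 2 * w) = (x - c * w) ^ 2 / w := by
    field_simp
    ring
  linarith [div_nonneg (sq_nonneg (x - c * w)) hw.le]

lemma sq_sub_div_integral_le_integral_sq_div {f f' w : ℝ → ℝ} {α β : ℝ} (hαβ : α ≤ β)
    (hf : ∀ t ∈ Icc α β, HasDerivWithinAt f (f' t) (Icc α β) t)
    (hf' : ContinuousOn f' (Icc α β)) (hw : ContinuousOn w (Icc α β))
    (hw_pos : ∀ t ∈ Icc α β, 0 < w t) :
    (f β - f α) ^ 2 / ∫ t in α..β, w t ≤ ∫ t in α..β, f' t ^ 2 / w t := by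
  set I := ∫ t in α..β, w t
  set c := (f β - f α) / I
  have hf'_int : IntervalIntegrable f' volume α β :=
    hf'.intervalIntegrable_of_Icc hαβ
  have hw_int : IntervalIntegrable w volume α β := hw.intervalIntegrable_of_Icc hαβ
  have ftc : ∫ t in α..β, f' t = f β - f α :=
    integral_eq_sub_of_hasDerivAt_of_le hαβ (fun t ht => (hf t ht).continuousWithinAt)
      (fun t ht => (hf t (Ioo_subset_Icc_self ht)).hasDerivAt (Icc_mem_nhds ht.1 ht.2))
      hf'_int
  have hc : 2 * c * (f β - f α) - c ^ 2 * I = (f β - f α) ^ 2 / I := by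
    rcases eq_or_ne I 0 with hI | hI
    · simp [c, hI]
    · simp only [c]
      field_simp
      ring
  calc (f β - f α) ^ 2 / I
      = ∫ t in α..β, (2 * c * f' t - c ^ 2 * w t) := by
        rw [integral_sub (hf'_int.const_mul _) (hw_int.const_mul _),
          intervalIntegral.integral_const_mul, intervalIntegral.integral_const_mul, ftc, hc]
    _ ≤ ∫ t in α..β, f' t ^ 2 / w t :=
        integral_mono_on hαβ ((hf'_int.const_mul _).sub (hw_int.const_mul _))
          (((hf'.pow 2).div hw fun t ht => (hw_pos t ht).ne').intervalIntegrable_of_Icc hαβ)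
          fun t ht => two_mul_mul_sub_sq_mul_le_sq_div (hw_pos t ht) c (f' t)

noncomputable def capacityPotential (w : ℝ → ℝ) (α β a b : ℝ) (t : ℝ) : ℝ :=
  (b - a) * (∫ s in α..t, w s) / (∫ s in α..β, w s) + a

section capacityPotential

variable {w : ℝ → ℝ} {α β a b : ℝ}

@[simp]
lemma capacityPotential_left : capacityPotential w α β a b α = a := by
  simp [capacityPotential]

lemma capacityPotential_right (hI : ∫ s in α..β, w s ≠ 0) :
    capacityPotential w α β a b β = b := by
  simp [capacityPotential, hI]

lemma hasDerivAt_capacityPotential (hw : Continuous w) (t : ℝ) :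
    HasDerivAt (capacityPotential w α β a b) ((b - a) * w t / ∫ s in α..β, w s) t := by
  have hG : HasDerivAt (fun x => ∫ s in α..x, w s) (w t) t :=
    integral_hasDerivAt_right (hw.intervalIntegrable _ _) (hw.stronglyMeasurableAtFilter _ _)
      hw.continuousAt
  exact ((hG.const_mul (b - a)).div_const _).add_const a

lemma integral_deriv_capacityPotential_sq_div (hw : Continuous w)
    (hw0 : ∀ t ∈ uIcc α β, w t ≠ 0) :
    ∫ t in α..β, deriv (capacityPotential w α β a b) t ^ 2 / w t
      = (b - a) ^ 2 / ∫ s in α..β, w s := by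
  have hpointwise : ∀ t ∈ uIcc α β, deriv (capacityPotential w α β a b) t ^ 2 / w t
      = (b - a) ^ 2 / (∫ s in α..β, w s) ^ 2 * w t := by
    intro t ht
    rw [(hasDerivAt_capacityPotential hw t).deriv]
    field_simp [hw0 t ht]
  rw [integral_congr hpointwise, intervalIntegral.integral_const_mul]
  rcases eq_or_ne (∫ s in α..β, w s) 0 with hI | hI
  · simp [hI]
  · field_simp

end capacityPotential

theorem stmt13_general (lam eps δ a b : ℝ) (hδ : 0 < δ) :
    (∀ f f' : ℝ → ℝ,
      (∀ t ∈ Set.Icc (-δ) δ, HasDerivWithinAt f (f' t) (Set.Icc (-δ) δ) t) →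
      ContinuousOn f' (Set.Icc (-δ) δ) →
      f (-δ) = a → f δ = b →
      (b - a)^2 / (∫ s in -δ..δ, Real.exp (lam*s^2/(2*eps)))
        ≤ ∫ t in -δ..δ, (f' t)^2 * Real.exp (-lam*t^2/(2*eps))) ∧
    (let F : ℝ → ℝ := fun t => (b - a) *
        (∫ s in -δ..t, Real.exp (lam*s^2/(2*eps))) /
        (∫ s in -δ..δ, Real.exp (lam*s^2/(2*eps))) + a
     F (-δ) = a ∧ F δ = b ∧
      (∫ t in -δ..δ, (deriv F t)^2 * Real.exp (-lam*t^2/(2*eps)))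
        = (b - a)^2 / ∫ s in -δ..δ, Real.exp (lam*s^2/(2*eps))) := by
  set w : ℝ → ℝ := fun s => Real.exp (lam * s ^ 2 / (2 * eps))
  have hw : Continuous w := by fun_prop
  have hw_inv : ∀ t, Real.exp (-lam * t ^ 2 / (2 * eps)) = (w t)⁻¹ := fun t => by
    rw [neg_mul, neg_div, Real.exp_neg]
  have hI : 0 < ∫ s in -δ..δ, w s :=
    intervalIntegral_pos_of_pos (hw.intervalIntegrable _ _) (fun _ => Real.exp_pos _)
      (by linarith)
  simp_rw [hw_inv, ← div_eq_mul_inv]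
  refine ⟨fun f f' hf hf' hfa hfb => ?_, capacityPotential_left,
    capacityPotential_right hI.ne',
    integral_deriv_capacityPotential_sq_div hw fun t _ => (Real.exp_pos _).ne'⟩
  simpa [hfa, hfb] using sq_sub_div_integral_le_integral_sq_div (by linarith) hf hf'
    hw.continuousOn fun t _ => Real.exp_pos _

/-- Explicit one-dimensional capacity minimization: the harmonic function
minimizes the weighted Dirichlet integral, with minimum value
(b−a)²/∫ e^{λs²/(2ε)} ds. -/
theorem stmt13 (lam eps δ a b : ℝ) (hlam : 0 < lam) (heps : 0 < eps) (hδ : 0 < δ) :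
    (∀ f f' : ℝ → ℝ,
      (∀ t ∈ Set.Icc (-δ) δ, HasDerivWithinAt f (f' t) (Set.Icc (-δ) δ) t) →
      ContinuousOn f' (Set.Icc (-δ) δ) →
      f (-δ) = a → f δ = b →
      (b - a)^2 / (∫ s in -δ..δ, Real.exp (lam*s^2/(2*eps)))
        ≤ ∫ t in -δ..δ, (f' t)^2 * Real.exp (-lam*t^2/(2*eps))) ∧
    (let F : ℝ → ℝ := fun t => (b - a) *
        (∫ s in -δ..t, Real.exp (lam*s^2/(2*eps))) /
        (∫ s in -δ..δ, Real.exp (lam*s^2/(2*eps))) + a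
     F (-δ) = a ∧ F δ = b ∧
      (∫ t in -δ..δ, (deriv F t)^2 * Real.exp (-lam*t^2/(2*eps)))
        = (b - a)^2 / ∫ s in -δ..δ, Real.exp (lam*s^2/(2*eps))) :=
  stmt13_general lam eps δ a b hδ
end
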